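/- (Pseudomixing property.) Let G ≤ Aut(T) be a mixing closed group with delay constant N = N(m). Then for every n, m ≥ 1, every vertex v with |v| ≥ n + N, and every A ⊆ π_n(G) and B ⊆ π_m(G), writing v = uw with |u| = n, one has μ_G(C_A ∩ 𝒯_v^{-1}(C_B) ∩ 𝒯_u^{-1}(st_G(w))) = μ_G(C_A) · μ_G(C_B) · μ_G(st_G(w)). In particular μ_G(C_A ∩ 𝒯_v^{-1}(C_B) | 𝒯_u^{-1}(st_G(w))) = μ_G(C_A) · μ_G(C_B). -/

import Mathlib

open MeasureTheory

namespace ArbGal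

/-- Vertices of the `d`-regular rooted tree: the free monoid on `{0, …, d-1}`. -/
abbrev V (d : ℕ) := List (Fin d)

instance (d : ℕ) : TopologicalSpace (V d) := ⊥

/-- A permutation of the vertices is an automorphism of the rooted tree iff it
preserves the level of vertices and the prefix (ancestor) relation. -/
def IsTreeAut {d : ℕ} (g : Equiv.Perm (V d)) : Prop :=
  (∀ v : V d, (g v).length = v.length) ∧ ∀ u v : V d, u <+: v → g u <+: g v

/-- The automorphism group `Aut(T)` of the `d`-regular rooted tree, realized as a
subgroup of the permutation group of the set of vertices. -/
def treeAutGroup (d : ℕ) : Subgroup (Equiv.Perm (V d)) where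
  carrier := {g | IsTreeAut g}
  one_mem' := ⟨fun _ => rfl, fun _ _ h => h⟩
  mul_mem' := by
    rintro a b ⟨ha1, ha2⟩ ⟨hb1, hb2⟩
    refine ⟨fun v => ?_, fun u v h => ?_⟩
    · simp only [Equiv.Perm.mul_apply, ha1, hb1]
    · simpa only [Equiv.Perm.mul_apply] using ha2 _ _ (hb2 _ _ h)
  inv_mem' := by
    rintro g ⟨h1, h2⟩
    have hlen : ∀ v : V _, (g⁻¹ v).length = v.length := by
      intro v
      have := h1 (g⁻¹ v)
      rw [(id (Equiv.apply_symm_apply g _) : g (g⁻¹ _) = _)] at this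
      exact this.symm
    refine ⟨hlen, fun u v huv => ?_⟩
    have h3 : (g⁻¹ v).take (g⁻¹ u).length <+: g⁻¹ v := List.take_prefix _ _
    have h4 : g ((g⁻¹ v).take (g⁻¹ u).length) <+: g (g⁻¹ v) := h2 _ _ h3
    rw [(id (Equiv.apply_symm_apply g _) : g (g⁻¹ _) = _)] at h4
    have hlen4 : (g ((g⁻¹ v).take (g⁻¹ u).length)).length = u.length := by
      rw [h1, List.length_take, hlen, hlen]
      exact min_eq_left huv.length_le
    have h5 : g ((g⁻¹ v).take (g⁻¹ u).length) = u := by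
      rcases List.prefix_or_prefix_of_prefix h4 huv with h | h
      · exact h.eq_of_length hlen4
      · exact (h.eq_of_length hlen4.symm).symm
    have h6 : (g⁻¹ v).take (g⁻¹ u).length = g⁻¹ u := by
      apply g.injective
      rw [h5, (id (Equiv.apply_symm_apply g _) : g (g⁻¹ _) = _)]
    rw [← h6]
    exact List.take_prefix _ _

/-- The group `Aut(T)`, as a type. -/
abbrev AutT (d : ℕ) := ↥(treeAutGroup d)

/-- `Aut(T)` carries the congruence topology, i.e. the topology of pointwise
convergence on the (discrete) set of vertices. -/
instance (d : ℕ) : TopologicalSpace (Equiv.Perm (V d)) :=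
  TopologicalSpace.induced (fun g => (g : V d → V d)) Pi.topologicalSpace

variable {d : ℕ}

lemma autT_len (g : AutT d) (v : V d) : ((g : Equiv.Perm (V d)) v).length = v.length := g.2.1 v

lemma autT_prefix (g : AutT d) {u v : V d} (h : u <+: v) :
    (g : Equiv.Perm (V d)) u <+: (g : Equiv.Perm (V d)) v := g.2.2 u v h

/-- The underlying function of the section `g|_v`. -/
def secFun (g : AutT d) (v w : V d) : V d := ((g : Equiv.Perm (V d)) (v ++ w)).drop v.length

lemma sec_spec (g : AutT d) (v w : V d) :
    (g : Equiv.Perm (V d)) (v ++ w) = (g : Equiv.Perm (V d)) v ++ secFun g v w := by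
  have h1 : (g : Equiv.Perm (V d)) v <+: (g : Equiv.Perm (V d)) (v ++ w) :=
    autT_prefix g (List.prefix_append v w)
  have h2 := autT_len g v
  have h3 : (g : Equiv.Perm (V d)) v = ((g : Equiv.Perm (V d)) (v ++ w)).take v.length := by
    rw [← h2]; exact List.prefix_iff_eq_take.mp h1
  conv_lhs => rw [← List.take_append_drop v.length ((g : Equiv.Perm (V d)) (v ++ w))]
  rw [← h3]; rfl

lemma coe_inv (g : AutT d) : ((g⁻¹ : AutT d) : Equiv.Perm (V d)) = (g : Equiv.Perm (V d))⁻¹ := rfl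

lemma sec_spec' (g : AutT d) (v w : V d) :
    (g : Equiv.Perm (V d)) (v ++ w)
      = (g : Equiv.Perm (V d)) v ++ List.drop v.length ((g : Equiv.Perm (V d)) (v ++ w)) :=
  sec_spec g v w

/-- The section (state) `g|_v` of a tree automorphism `g` at the vertex `v`; it is
the unique automorphism satisfying `g(v·w) = g(v)·(g|_v)(w)` for all `w`. -/
def sectionAt (g : AutT d) (v : V d) : AutT d :=
  ⟨{ toFun := secFun g v
     invFun := secFun g⁻¹ ((g : Equiv.Perm (V d)) v)
     left_inv := by
       intro w
       show secFun g⁻¹ ((g : Equiv.Perm (V d)) v) (secFun g v w) = w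
       unfold secFun
       rw [coe_inv, ← sec_spec' g v w, (id (Equiv.symm_apply_apply (g : Equiv.Perm (V d)) _) : (g : Equiv.Perm (V d))⁻¹ ((g : Equiv.Perm (V d)) _) = _), autT_len, List.drop_left]
     right_inv := by
       intro w
       show secFun g v (secFun g⁻¹ ((g : Equiv.Perm (V d)) v) w) = w
       unfold secFun
       rw [coe_inv]
       have h := sec_spec' g⁻¹ ((g : Equiv.Perm (V d)) v) w
       rw [coe_inv, (id (Equiv.symm_apply_apply (g : Equiv.Perm (V d)) _) : (g : Equiv.Perm (V d))⁻¹ ((g : Equiv.Perm (V d)) _) = _)] at h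
       rw [← h, (id (Equiv.apply_symm_apply (g : Equiv.Perm (V d)) _) : (g : Equiv.Perm (V d)) ((g : Equiv.Perm (V d))⁻¹ _) = _), ← autT_len g v, List.drop_left] },
   by
     constructor
     · intro w
       show (secFun g v w).length = w.length
       unfold secFun
       rw [List.length_drop, autT_len, List.length_append]
       omega
     · intro u w huw
       show secFun g v u <+: secFun g v w
       have h1 : v ++ u <+: v ++ w := by
         obtain ⟨c, rfl⟩ := huw
         rw [← List.append_assoc]
         exact List.prefix_append _ _
       have h2 := autT_prefix g h1
       rw [sec_spec g v u, sec_spec g v w] at h2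
       obtain ⟨c, hc⟩ := h2
       rw [List.append_assoc] at hc
       exact ⟨c, List.append_cancel_left hc⟩⟩

/-- The pointwise stabilizer `St(n)` of the `n`-th level, as a subgroup of `Aut(T)`. -/
def levelStab (d n : ℕ) : Subgroup (AutT d) where
  carrier := {g | ∀ v : V d, v.length = n → (g : Equiv.Perm (V d)) v = v}
  one_mem' := fun _ _ => rfl
  mul_mem' := by
    rintro a b ha hb v hv
    show (a : Equiv.Perm (V d)) ((b : Equiv.Perm (V d)) v) = v
    rw [hb v hv, ha v hv]
  inv_mem' := by
    intro g hg v hv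
    show (g : Equiv.Perm (V d))⁻¹ v = v
    conv_lhs => rw [← hg v hv]
    exact Equiv.symm_apply_apply _ _

/-- Two automorphisms agree on the truncated tree `T^m` (have the same image
under `π_m`). -/
def truncEq (d : ℕ) (m : ℕ) (g h : AutT d) : Prop :=
  ∀ w : V d, w.length ≤ m → (g : Equiv.Perm (V d)) w = (h : Equiv.Perm (V d)) w

/-- `St_G(n)_v^m = π_m(G)`: the projection of the `n`-th level stabilizer of `G`
at the vertex `v`, truncated at depth `m`, coincides with `π_m(G)`. -/
def SectModEq (d : ℕ) (G : Subgroup (AutT d)) (n m : ℕ) (v : V d) : Prop :=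
  ∀ a : AutT d,
    (∃ g, g ∈ G ∧ g ∈ levelStab d n ∧ (g : Equiv.Perm (V d)) v = v ∧
        truncEq d m (sectionAt g v) a)
    ↔ (∃ b ∈ G, truncEq d m b a)

/-- `G` is self-similar: all sections of elements of `G` belong to `G`. -/
def SelfSimilar (d : ℕ) (G : Subgroup (AutT d)) : Prop :=
  ∀ g ∈ G, ∀ v : V d, sectionAt g v ∈ G

/-- `G` is level-transitive. -/
def LevelTrans (d : ℕ) (G : Subgroup (AutT d)) : Prop :=
  ∀ v w : V d, v.length = w.length → ∃ g ∈ G, (g : Equiv.Perm (V d)) v = w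

/-- `G` is fractal: self-similar, level-transitive, and every projection
`G_v = φ_v(st_G(v))` is all of `G`. -/
def Fractal (d : ℕ) (G : Subgroup (AutT d)) : Prop :=
  SelfSimilar d G ∧ LevelTrans d G ∧
    ∀ v : V d, ∀ h ∈ G, ∃ g ∈ G, (g : Equiv.Perm (V d)) v = v ∧ sectionAt g v = h

/-- For every `n ≥ 1`, the level stabilizer `St_G(n)` acts level-transitively on the
subtrees rooted at the vertices of level `n`. -/
def StabLevelTrans (d : ℕ) (G : Subgroup (AutT d)) : Prop :=
  ∀ n : ℕ, 1 ≤ n → ∀ v u w : V d, v.length = n → u.length = w.length →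
    ∃ g ∈ G ⊓ levelStab d n, (g : Equiv.Perm (V d)) (v ++ u) = v ++ w

/-- A fractal group `G ≤ Aut(T)` is mixing with delay constant `N`. -/
def MixingWithDelay (d : ℕ) (G : Subgroup (AutT d)) (N : ℕ) : Prop :=
  Fractal d G ∧ StabLevelTrans d G ∧
    ∀ m : ℕ, 1 ≤ m → ∀ n : ℕ, 1 ≤ n → ∀ v : V d, n + N ≤ v.length → SectModEq d G n m v

/-- A fractal group `G ≤ Aut(T)` is mixing: its level stabilizers act
level-transitively below their level, and for all `n, m ≥ 1` there is a delay
`N = N(m)` with `St_G(n)_v^m = π_m(G)` whenever `|v| ≥ n + N`. -/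
def Mixing (d : ℕ) (G : Subgroup (AutT d)) : Prop :=
  Fractal d G ∧ StabLevelTrans d G ∧
    ∀ m : ℕ, 1 ≤ m → ∃ N : ℕ,
      ∀ n : ℕ, 1 ≤ n → ∀ v : V d, n + N ≤ v.length → SectModEq d G n m v

/-- `g` fixes an end of the tree `T`, i.e. an infinite rooted path. -/
def FixesEnd (d : ℕ) (g : AutT d) : Prop :=
  ∃ ω : ℕ → Fin d, ∀ n : ℕ,
    (g : Equiv.Perm (V d)) (List.ofFn (fun i : Fin n => ω i)) = List.ofFn (fun i : Fin n => ω i)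

/-- `X_n(g)`: the number of vertices of level `n` fixed by `g`. -/
noncomputable def Xfix (d n : ℕ) (g : AutT d) : ℕ :=
  Set.ncard {w : Fin n → Fin d |
    (g : Equiv.Perm (V d)) (List.ofFn w) = List.ofFn w}

/-- The Borel σ-algebra on a closed subgroup of `Aut(T)`. -/
instance (d : ℕ) (G : Subgroup (AutT d)) : MeasurableSpace ↥G := borel ↥G

/-- The fixed-point process `{X_n}` of `G`, with respect to the measure `μ` on `G`,
is a martingale. -/
def FPMartingale (d : ℕ) (G : Subgroup (AutT d)) (μ : Measure ↥G) : Prop :=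
  (∀ n : ℕ, 1 ≤ n → Integrable (fun g : ↥G => (Xfix d n (g : AutT d) : ℝ)) μ) ∧
  ∀ n : ℕ, 1 ≤ n → ∀ t : ℕ → ℝ,
    μ {g : ↥G | ∀ i, 1 ≤ i → i ≤ n → (Xfix d i (g : AutT d) : ℝ) = t i} ≠ 0 →
    ∫ g in {g : ↥G | ∀ i, 1 ≤ i → i ≤ n → (Xfix d i (g : AutT d) : ℝ) = t i},
        (Xfix d (n + 1) (g : AutT d) : ℝ) ∂μ
      = t n * (μ {g : ↥G | ∀ i, 1 ≤ i → i ≤ n → (Xfix d i (g : AutT d) : ℝ) = t i}).toReal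


/-- The cone set `C_A = π_n⁻¹(A)` determined by a set `A` of elements of `G`
(states at depth `n`). -/
def coneSet (d : ℕ) (G : Subgroup (AutT d)) (n : ℕ) (A : Set (AutT d)) : Set (AutT d) :=
  {x | x ∈ G ∧ ∃ a ∈ A, truncEq d n x a}

/-- The stabilizer `st_G(w)` of a vertex, as a subset of `Aut(T)`. -/
def vertexStabSet (d : ℕ) (G : Subgroup (AutT d)) (w : V d) : Set (AutT d) :=
  {x | x ∈ G ∧ (x : Equiv.Perm (V d)) w = w}

/-- Preimage under the section operator `𝒯_v : g ↦ g|_v`. -/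
def secPre (d : ℕ) (v : V d) (S : Set (AutT d)) : Set (AutT d) :=
  {x | sectionAt x v ∈ S}

/-!
Membership of `g ∈ G` in `C_A`, in `𝒯_u⁻¹(st(w))` and in `𝒯_{uw}⁻¹(C_B)` is read off the triple
`(π_n(g), g|_u(w), π_m(g|_{uw}))`. Since `(hg)|_v = h|_{g(v)} g|_v`, whether two elements have the
same triple is preserved by left multiplication, so the level sets of the triple are the left
cosets of one subgroup and the triple is uniformly distributed under the Haar measure. The
mixing hypotheses make its range the full product `π_n(G) × X^{|w|} × π_m(G)`: level-transitivity
of `St_G(n)` moves the middle coordinate and `St_G(n)_{uw}^m = π_m(G)` the last one. Hence the three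
coordinates are independent, and the same uniformity argument applied to `π_n`, `π_m` and
`g ↦ g(w)` identifies each factor with `μ(C_A)`, `μ(C_B)` and `μ(st(w))`.
-/

section LeftInvariantFibres

variable {Γ X : Type*} [Group Γ] [MeasurableSpace Γ] [MeasurableMul Γ]
  (μ : Measure Γ) [μ.IsMulLeftInvariant] {φ : Γ → X}

/-- When `φ x = φ y` is a left-invariant relation, the fibres of `φ` are the left cosets of the
fibre through `1`. -/
lemma measure_fiber_eq_of_mul_congr (hφ : ∀ g x y, φ x = φ y → φ (g * x) = φ (g * y))
    (g : Γ) : μ (φ ⁻¹' {φ g}) = μ (φ ⁻¹' {φ 1}) := by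
  have hcoset : φ ⁻¹' {φ g} = (fun x => g⁻¹ * x) ⁻¹' (φ ⁻¹' {φ 1}) := by
    ext x
    simp only [Set.mem_preimage, Set.mem_singleton_iff]
    exact ⟨fun h => by simpa using hφ g⁻¹ x g h, fun h => by simpa using hφ g _ 1 h⟩
  rw [hcoset, measure_preimage_mul]

variable [MeasurableSpace X] [MeasurableSingletonClass X]

lemma measure_preimage_eq_ncard_mul (hφ : ∀ g x y, φ x = φ y → φ (g * x) = φ (g * y))
    (hmeas : Measurable φ) (hfin : (Set.range φ).Finite) (T : Set X) :
    μ (φ ⁻¹' T) = (T ∩ Set.range φ).ncard * μ (φ ⁻¹' {φ 1}) := by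
  set F := (hfin.subset Set.inter_subset_right : (T ∩ Set.range φ).Finite).toFinset
  have hT : φ ⁻¹' T = φ ⁻¹' F := by simp [F]
  rw [hT, ← sum_measure_preimage_singleton F fun y _ => hmeas (measurableSet_singleton y),
    Set.ncard_eq_toFinset_card _ (hfin.subset Set.inter_subset_right), ← nsmul_eq_mul,
    ← Finset.sum_const]
  refine Finset.sum_congr rfl fun y hy => ?_
  obtain ⟨g, rfl⟩ := ((Set.Finite.mem_toFinset _).mp hy).2
  exact measure_fiber_eq_of_mul_congr μ hφ g

lemma ncard_range_mul_measure_preimage [IsProbabilityMeasure μ]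
    (hφ : ∀ g x y, φ x = φ y → φ (g * x) = φ (g * y)) (hmeas : Measurable φ)
    (hfin : (Set.range φ).Finite) (T : Set X) :
    (Set.range φ).ncard * μ (φ ⁻¹' T) = (T ∩ Set.range φ).ncard := by
  have huniv := measure_preimage_eq_ncard_mul μ hφ hmeas hfin Set.univ
  rw [Set.preimage_univ, measure_univ, Set.univ_inter] at huniv
  rw [measure_preimage_eq_ncard_mul μ hφ hmeas hfin T, mul_left_comm, ← huniv, mul_one]

end LeftInvariantFibres

open scoped ENNReal

variable {d : ℕ}

section Sections

lemma apply_append_eq (g : AutT d) (v ω : V d) :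
    (g : Equiv.Perm (V d)) (v ++ ω)
      = (g : Equiv.Perm (V d)) v ++ ((sectionAt g v : AutT d) : Equiv.Perm (V d)) ω :=
  sec_spec g v ω

lemma sectionAt_mul (g h : AutT d) (v : V d) :
    sectionAt (g * h) v = sectionAt g ((h : Equiv.Perm (V d)) v) * sectionAt h v := by
  refine Subtype.ext (Equiv.ext fun ω => ?_)
  apply List.append_cancel_left (as := ((g * h : AutT d) : Equiv.Perm (V d)) v)
  rw [← apply_append_eq]
  change (g : Equiv.Perm (V d)) ((h : Equiv.Perm (V d)) (v ++ ω)) = _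
  rw [apply_append_eq h, apply_append_eq g]
  rfl

lemma apply_eq_self_of_prefix (g : AutT d) {u v : V d} (huv : u <+: v)
    (hv : (g : Equiv.Perm (V d)) v = v) : (g : Equiv.Perm (V d)) u = u := by
  have hgu : (g : Equiv.Perm (V d)) u <+: v := hv ▸ autT_prefix g huv
  rcases List.prefix_or_prefix_of_prefix hgu huv with h | h
  · exact h.eq_of_length (autT_len g u)
  · exact (h.eq_of_length (autT_len g u).symm).symm

lemma apply_eq_self_of_mem_levelStab {n : ℕ} {g : AutT d} (hg : g ∈ levelStab d n)
    {ω : V d} (hω : ω.length ≤ n) : (g : Equiv.Perm (V d)) ω = ω := by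
  cases ω with
  | nil => exact List.eq_nil_of_length_eq_zero (autT_len g [])
  | cons a ω =>
    refine apply_eq_self_of_prefix g (List.prefix_append _ (.replicate (n - (ω.length + 1)) a)) ?_
    simp only [List.length_cons] at hω
    exact hg _ (by simp only [List.length_append, List.length_cons, List.length_replicate]; omega)

end Sections

section LevelProjection

/-- `π_n(g)`, recorded as the restriction of `g` to the vertices of level at most `n`. -/
def levelProj (n : ℕ) (g : AutT d) : {ω : V d // ω.length ≤ n} → V d :=
  fun ω => (g : Equiv.Perm (V d)) ω

lemma levelProj_eq_iff {n : ℕ} {g h : AutT d} : levelProj n g = levelProj n h ↔ truncEq d n g h :=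
  ⟨fun he ω hω => congrFun he ⟨ω, hω⟩, fun ht => funext fun ω => ht ω.1 ω.2⟩

lemma levelProj_mul (n : ℕ) (g h : AutT d) :
    levelProj n (g * h) = (g : Equiv.Perm (V d)) ∘ levelProj n h := rfl

lemma levelProj_mul_of_mem_levelStab {n : ℕ} (g : AutT d) {h : AutT d} (hh : h ∈ levelStab d n) :
    levelProj n (g * h) = levelProj n g :=
  funext fun ω => congrArg (g : Equiv.Perm (V d)) (apply_eq_self_of_mem_levelStab hh ω.2)

lemma finite_range_levelProj (n : ℕ) : (Set.range (levelProj (d := d) n)).Finite := by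
  have hball : {ω : V d | ω.length ≤ n}.Finite := List.finite_length_le (Fin d) n
  have : Finite {ω : V d // ω.length ≤ n} := hball.to_subtype
  refine (Set.Finite.pi (t := fun _ => {ω : V d | ω.length ≤ n}) fun _ => hball).subset ?_
  rintro _ ⟨g, rfl⟩ ω -
  exact (autT_len g ω.1).trans_le ω.2

end LevelProjection

section Measurability

instance : DiscreteTopology (V d) := ⟨rfl⟩

instance : MeasurableSpace (V d) := ⊤

instance : BorelSpace (V d) := ⟨borel_eq_top_of_discrete.symm⟩

instance (G : Subgroup (AutT d)) : BorelSpace ↥G := ⟨rfl⟩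

variable {G : Subgroup (AutT d)}

lemma continuous_apply_vertex (ω : V d) :
    Continuous fun x : ↥G => ((x : AutT d) : Equiv.Perm (V d)) ω :=
  (continuous_apply ω).comp
    (continuous_induced_dom.comp (continuous_subtype_val.comp continuous_subtype_val))

lemma continuous_of_continuous_apply_vertex {Y : Type*} [TopologicalSpace Y] {f : Y → ↥G}
    (hf : ∀ ω : V d, Continuous fun y => ((f y : AutT d) : Equiv.Perm (V d)) ω) :
    Continuous f := by
  simp only [continuous_induced_rng]
  exact continuous_pi hf

instance (G : Subgroup (AutT d)) : MeasurableMul ↥G where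
  measurable_const_mul _ := Continuous.measurable <| continuous_of_continuous_apply_vertex
    fun ω => continuous_of_discreteTopology.comp (continuous_apply_vertex ω)
  measurable_mul_const a := Continuous.measurable <| continuous_of_continuous_apply_vertex
    fun ω => continuous_apply_vertex (((a : AutT d) : Equiv.Perm (V d)) ω)

lemma measurable_apply_vertex (ω : V d) :
    Measurable fun x : ↥G => ((x : AutT d) : Equiv.Perm (V d)) ω :=
  (continuous_apply_vertex ω).measurable

lemma measurable_levelProj (n : ℕ) : Measurable fun x : ↥G => levelProj n (x : AutT d) :=
  measurable_pi_lambda _ fun ω => measurable_apply_vertex ω.1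

lemma measurable_levelProj_sectionAt (m : ℕ) (v : V d) :
    Measurable fun x : ↥G => levelProj m (sectionAt (x : AutT d) v) :=
  measurable_pi_lambda _ fun ω => Measurable.of_discrete.comp (measurable_apply_vertex (v ++ ω.1))

end Measurability

section MixingData

lemma sectionAt_apply_eq_of_apply_append {g : AutT d} {u w r : V d}
    (h : (g : Equiv.Perm (V d)) (u ++ w) = (g : Equiv.Perm (V d)) u ++ r) :
    ((sectionAt g u : AutT d) : Equiv.Perm (V d)) w = r :=
  List.append_cancel_left ((apply_append_eq g u w).symm.trans h)

def mixingData (n m : ℕ) (u w : V d) (g : AutT d) :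
    ({ω : V d // ω.length ≤ n} → V d) × V d × ({ω : V d // ω.length ≤ m} → V d) :=
  (levelProj n g, ((sectionAt g u : AutT d) : Equiv.Perm (V d)) w,
    levelProj m (sectionAt g (u ++ w)))

lemma mixingData_mul_congr {n m : ℕ} {u : V d} (hu : u.length = n) (w : V d) (g : AutT d)
    {x y : AutT d} (h : mixingData n m u w x = mixingData n m u w y) :
    mixingData n m u w (g * x) = mixingData n m u w (g * y) := by
  simp only [mixingData, Prod.mk.injEq] at h
  obtain ⟨hproj, hsec, hproj'⟩ := h
  have hxu : (x : Equiv.Perm (V d)) u = (y : Equiv.Perm (V d)) u := congrFun hproj ⟨u, hu.le⟩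
  have hxuw : (x : Equiv.Perm (V d)) (u ++ w) = (y : Equiv.Perm (V d)) (u ++ w) := by
    rw [apply_append_eq, apply_append_eq, hxu, hsec]
  simp only [mixingData, sectionAt_mul, levelProj_mul, Subgroup.coe_mul, Equiv.Perm.mul_apply,
    hproj, hxu, hxuw, hsec, hproj']

variable {G : Subgroup (AutT d)}

lemma measurable_mixingData (n m : ℕ) (u w : V d) :
    Measurable fun x : ↥G => mixingData n m u w (x : AutT d) :=
  (measurable_levelProj n).prodMk <|
    (Measurable.of_discrete.comp (measurable_apply_vertex (u ++ w))).prodMk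
      (measurable_levelProj_sectionAt m (u ++ w))

lemma range_mixingData (hss : SelfSimilar d G) (hstab : StabLevelTrans d G) {n m : ℕ}
    (hn : 1 ≤ n) {u w : V d} (hu : u.length = n) (hsme : SectModEq d G n m (u ++ w)) :
    Set.range (fun x : ↥G => mixingData n m u w (x : AutT d)) =
      (levelProj n '' (G : Set (AutT d))) ×ˢ {r : V d | r.length = w.length} ×ˢ
        (levelProj m '' (G : Set (AutT d))) := by
  apply subset_antisymm
  · rintro _ ⟨x, rfl⟩
    exact ⟨⟨x, x.2, rfl⟩, autT_len _ w, ⟨_, hss _ x.2 _, rfl⟩⟩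
  rintro ⟨_, r, _⟩ ⟨⟨g₁, hg₁, rfl⟩, hr, ⟨g₃, hg₃, rfl⟩⟩
  set r' := (((sectionAt g₁ u)⁻¹ : AutT d) : Equiv.Perm (V d)) r
  obtain ⟨t, ht, htw⟩ := hstab n hn u w r' hu ((autT_len _ r).trans hr).symm
  obtain ⟨htG, htSt⟩ := Subgroup.mem_inf.mp ht
  set c := sectionAt g₁ (u ++ r') * sectionAt t (u ++ w)
  have hcG : c ∈ G := G.mul_mem (hss _ hg₁ _) (hss _ htG _)
  obtain ⟨s, hsG, hsSt, hsv, hs⟩ :=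
    (hsme (c⁻¹ * g₃)).mpr ⟨_, G.mul_mem (G.inv_mem hcG) hg₃, fun _ _ => rfl⟩
  have hts : t * s ∈ levelStab d n := (levelStab d n).mul_mem htSt hsSt
  refine ⟨⟨g₁ * t * s, G.mul_mem (G.mul_mem hg₁ htG) hsG⟩, ?_⟩
  simp only [mixingData, Prod.mk.injEq]
  refine ⟨by rw [mul_assoc, levelProj_mul_of_mem_levelStab _ hts], ?_, ?_⟩
  · apply sectionAt_apply_eq_of_apply_append
    change (g₁ : Equiv.Perm (V d)) ((t : Equiv.Perm (V d)) ((s : Equiv.Perm (V d)) (u ++ w)))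
      = (g₁ : Equiv.Perm (V d)) ((t : Equiv.Perm (V d)) ((s : Equiv.Perm (V d)) u)) ++ r
    rw [hsv, htw, apply_eq_self_of_mem_levelStab hsSt hu.le,
      apply_eq_self_of_mem_levelStab htSt hu.le, apply_append_eq]
    exact congrArg _ (Equiv.apply_symm_apply _ r)
  · rw [sectionAt_mul, hsv, sectionAt_mul, htw, levelProj_mul, levelProj_eq_iff.mpr hs,
      ← levelProj_mul, mul_inv_cancel_left]

end MixingData

section Measures

variable {G : Subgroup (AutT d)} (μ : Measure ↥G) [IsProbabilityMeasure μ]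
  [μ.IsMulLeftInvariant]

lemma range_levelProj_comp_val (n : ℕ) :
    Set.range (fun x : ↥G => levelProj n (x : AutT d)) = levelProj n '' (G : Set (AutT d)) :=
  (Set.image_eq_range _ _).symm

lemma mem_coneSet_iff {n : ℕ} {A : Set (AutT d)} {x : AutT d} (hx : x ∈ G) :
    x ∈ coneSet d G n A ↔ levelProj n x ∈ levelProj n '' A := by
  simp only [coneSet, Set.mem_ofPred_eq, Set.mem_image, hx, true_and]
  exact exists_congr fun a => and_congr_right fun _ => levelProj_eq_iff.symm.trans eq_comm

lemma mem_vertexStabSet_iff {w : V d} {x : AutT d} (hx : x ∈ G) :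
    x ∈ vertexStabSet d G w ↔ (x : Equiv.Perm (V d)) w = w :=
  and_iff_right hx

lemma preimage_coneSet (n : ℕ) (A : Set (AutT d)) :
    (Subtype.val ⁻¹' coneSet d G n A : Set ↥G)
      = (fun x : ↥G => levelProj n (x : AutT d)) ⁻¹' (levelProj n '' A) :=
  Set.ext fun x => mem_coneSet_iff x.2

lemma ncard_mul_measure_coneSet (n : ℕ) {A : Set (AutT d)} (hA : A ⊆ G) :
    (levelProj n '' (G : Set (AutT d))).ncard * μ (Subtype.val ⁻¹' coneSet d G n A)
      = (levelProj n '' A).ncard := by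
  have hrange := range_levelProj_comp_val (G := G) n
  rw [preimage_coneSet, ← hrange, ncard_range_mul_measure_preimage μ
      (fun g x y h => by simp only [Subgroup.coe_mul, levelProj_mul, h])
      (measurable_levelProj n)
      ((finite_range_levelProj n).subset (Set.range_comp_subset_range Subtype.val (levelProj n))),
    hrange, Set.inter_eq_left.mpr (Set.image_mono hA)]

lemma ncard_mul_measure_vertexStabSet (hlt : LevelTrans d G) (w : V d) :
    {r : V d | r.length = w.length}.ncard * μ (Subtype.val ⁻¹' vertexStabSet d G w) = 1 := by
  have hrange : Set.range (fun x : ↥G => ((x : AutT d) : Equiv.Perm (V d)) w)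
      = {r : V d | r.length = w.length} := by
    refine subset_antisymm ?_ fun r hr => ?_
    · rintro _ ⟨x, rfl⟩
      exact autT_len _ w
    · obtain ⟨g, hg, rfl⟩ := hlt w r hr.symm
      exact ⟨⟨g, hg⟩, rfl⟩
  have hpre : (Subtype.val ⁻¹' vertexStabSet d G w : Set ↥G)
      = (fun x : ↥G => ((x : AutT d) : Equiv.Perm (V d)) w) ⁻¹' {w} :=
    Set.ext fun x => mem_vertexStabSet_iff x.2
  rw [hpre, ← hrange, ncard_range_mul_measure_preimage μ
      (fun g _ _ h => congrArg (fun r => ((g : AutT d) : Equiv.Perm (V d)) r) h)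
      (measurable_apply_vertex w)
      (hrange ▸ List.finite_length_eq (Fin d) w.length),
    Set.inter_eq_left.mpr (Set.singleton_subset_iff.mpr (hrange ▸ rfl)), Set.ncard_singleton,
    Nat.cast_one]

lemma ncard_image_levelProj_ne_zero (n : ℕ) : (levelProj n '' (G : Set (AutT d))).ncard ≠ 0 :=
  Set.ncard_ne_zero_of_mem ⟨1, G.one_mem, rfl⟩
    ((finite_range_levelProj n).subset (Set.image_subset_range _ _))

/-- `|π_n(G)| · d^{|w|} · |π_m(G)|`, the size of the range of `mixingData`. -/
noncomputable def mixingCount (G : Subgroup (AutT d)) (n m : ℕ) (w : V d) : ℕ :=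
  (levelProj n '' (G : Set (AutT d))).ncard *
    ({r : V d | r.length = w.length}.ncard * (levelProj m '' (G : Set (AutT d))).ncard)

lemma mixingCount_ne_zero (n m : ℕ) (w : V d) : mixingCount G n m w ≠ 0 :=
  mul_ne_zero (ncard_image_levelProj_ne_zero n) <|
    mul_ne_zero (Set.ncard_ne_zero_of_mem rfl (List.finite_length_eq (Fin d) w.length))
      (ncard_image_levelProj_ne_zero m)

lemma preimage_pseudomixingEvent (hss : SelfSimilar d G) (n m : ℕ) (u w : V d)
    (A B : Set (AutT d)) :
    (Subtype.val ⁻¹' (coneSet d G n A ∩ secPre d (u ++ w) (coneSet d G m B) ∩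
        secPre d u (vertexStabSet d G w)) : Set ↥G)
      = (fun x : ↥G => mixingData n m u w (x : AutT d)) ⁻¹'
          ((levelProj n '' A) ×ˢ {w} ×ˢ (levelProj m '' B)) := by
  ext x
  simp only [Set.mem_preimage, Set.mem_inter_iff, secPre, Set.mem_ofPred_eq, mixingData,
    Set.mem_prod, Set.mem_singleton_iff, mem_coneSet_iff x.2, mem_coneSet_iff (hss _ x.2 _),
    mem_vertexStabSet_iff (hss _ x.2 _)]
  rw [and_right_comm, and_assoc]

lemma preimage_secPre_vertexStabSet (hss : SelfSimilar d G) (n m : ℕ) (u w : V d) :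
    (Subtype.val ⁻¹' secPre d u (vertexStabSet d G w) : Set ↥G)
      = (fun x : ↥G => mixingData n m u w (x : AutT d)) ⁻¹'
          (Set.univ ×ˢ {w} ×ˢ Set.univ) := by
  ext x
  simp only [Set.mem_preimage, secPre, Set.mem_ofPred_eq, mixingData, Set.mem_prod,
    Set.mem_univ, Set.mem_singleton_iff, true_and, and_true, mem_vertexStabSet_iff (hss _ x.2 _)]

section Mixing

variable {n m : ℕ} {u w : V d}

lemma ncard_mul_measure_preimage_mixingData
    (hss : SelfSimilar d G) (hstab : StabLevelTrans d G) (hn : 1 ≤ n) (hu : u.length = n)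
    (hsme : SectModEq d G n m (u ++ w))
    (T : Set (({ω : V d // ω.length ≤ n} → V d) × V d × ({ω : V d // ω.length ≤ m} → V d))) :
    (mixingCount G n m w : ℝ≥0∞) *
      μ ((fun x : ↥G => mixingData n m u w (x : AutT d)) ⁻¹' T)
      = (T ∩ (levelProj n '' (G : Set (AutT d))) ×ˢ {r : V d | r.length = w.length} ×ˢ
          (levelProj m '' (G : Set (AutT d)))).ncard := by
  have hrange := range_mixingData hss hstab hn hu hsme
  have hfin : (Set.range fun x : ↥G => mixingData n m u w (x : AutT d)).Finite := by
    rw [hrange]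
    exact ((finite_range_levelProj n).subset (Set.image_subset_range _ _)).prod
      ((List.finite_length_eq (Fin d) w.length).prod
        ((finite_range_levelProj m).subset (Set.image_subset_range _ _)))
  have key := ncard_range_mul_measure_preimage μ (fun g _ _ => mixingData_mul_congr hu w g)
    (measurable_mixingData n m u w) hfin T
  rwa [hrange, Set.ncard_prod, Set.ncard_prod] at key

lemma ncard_mul_measure_pseudomixingEvent
    (hss : SelfSimilar d G) (hstab : StabLevelTrans d G) (hn : 1 ≤ n) (hu : u.length = n)
    (hsme : SectModEq d G n m (u ++ w))
    {A B : Set (AutT d)} (hA : A ⊆ G) (hB : B ⊆ G) :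
    (mixingCount G n m w : ℝ≥0∞) *
      μ (Subtype.val ⁻¹' (coneSet d G n A ∩ secPre d (u ++ w) (coneSet d G m B) ∩
        secPre d u (vertexStabSet d G w)))
      = (levelProj n '' A).ncard * (levelProj m '' B).ncard := by
  have hsub : (levelProj n '' A) ×ˢ {w} ×ˢ (levelProj m '' B) ⊆
      (levelProj n '' (G : Set (AutT d))) ×ˢ {r : V d | r.length = w.length} ×ˢ
        (levelProj m '' (G : Set (AutT d))) :=
    Set.prod_mono (Set.image_mono hA)
      (Set.prod_mono (Set.singleton_subset_iff.mpr rfl) (Set.image_mono hB))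
  rw [preimage_pseudomixingEvent hss,
    ncard_mul_measure_preimage_mixingData μ hss hstab hn hu hsme,
    Set.inter_eq_left.mpr hsub, Set.ncard_prod, Set.ncard_prod, Set.ncard_singleton, one_mul,
    Nat.cast_mul]

lemma ncard_mul_measure_secPre_vertexStabSet
    (hss : SelfSimilar d G) (hstab : StabLevelTrans d G) (hn : 1 ≤ n) (hu : u.length = n)
    (hsme : SectModEq d G n m (u ++ w)) :
    (mixingCount G n m w : ℝ≥0∞) *
      μ (Subtype.val ⁻¹' secPre d u (vertexStabSet d G w))
      = (levelProj n '' (G : Set (AutT d))).ncard * (levelProj m '' (G : Set (AutT d))).ncard := by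
  rw [preimage_secPre_vertexStabSet hss n m,
    ncard_mul_measure_preimage_mixingData μ hss hstab hn hu hsme, Set.prod_inter_prod,
    Set.prod_inter_prod, Set.univ_inter, Set.univ_inter,
    Set.singleton_inter_of_mem (show w ∈ {r : V d | r.length = w.length} from rfl),
    Set.ncard_prod, Set.ncard_prod, Set.ncard_singleton, one_mul, Nat.cast_mul]

lemma measure_pseudomixingEvent
    (hss : SelfSimilar d G) (hstab : StabLevelTrans d G) (hn : 1 ≤ n) (hu : u.length = n)
    (hsme : SectModEq d G n m (u ++ w))
    (hlt : LevelTrans d G) {A B : Set (AutT d)} (hA : A ⊆ G) (hB : B ⊆ G) :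
    μ (Subtype.val ⁻¹' (coneSet d G n A ∩ secPre d (u ++ w) (coneSet d G m B) ∩
        secPre d u (vertexStabSet d G w)))
      = μ (Subtype.val ⁻¹' coneSet d G n A) * μ (Subtype.val ⁻¹' coneSet d G m B) *
          μ (Subtype.val ⁻¹' vertexStabSet d G w) := by
  have h := congr($(ncard_mul_measure_coneSet μ n hA) * $(ncard_mul_measure_coneSet μ m hB) *
    $(ncard_mul_measure_vertexStabSet μ hlt w))
  rw [mul_one] at h
  rw [← ENNReal.mul_right_inj (Nat.cast_ne_zero.mpr (mixingCount_ne_zero n m w))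
      (ENNReal.natCast_ne_top _),
    ncard_mul_measure_pseudomixingEvent μ hss hstab hn hu hsme hA hB, ← h]
  push_cast [mixingCount]
  ring

lemma measure_secPre_vertexStabSet
    (hss : SelfSimilar d G) (hstab : StabLevelTrans d G) (hn : 1 ≤ n) (hu : u.length = n)
    (hsme : SectModEq d G n m (u ++ w))
    (hlt : LevelTrans d G) :
    μ (Subtype.val ⁻¹' secPre d u (vertexStabSet d G w))
      = μ (Subtype.val ⁻¹' vertexStabSet d G w) := by
  have h := congr($(ncard_mul_measure_vertexStabSet μ hlt w) *
    (levelProj n '' (G : Set (AutT d))).ncard * (levelProj m '' (G : Set (AutT d))).ncard)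
  rw [one_mul] at h
  rw [← ENNReal.mul_right_inj (Nat.cast_ne_zero.mpr (mixingCount_ne_zero n m w))
      (ENNReal.natCast_ne_top _),
    ncard_mul_measure_secPre_vertexStabSet μ hss hstab hn hu hsme, ← h]
  push_cast [mixingCount]
  ring

end Mixing

end Measures

theorem pseudomixing_general
    (d : ℕ) (G : Subgroup (AutT d))
    (N : ℕ) (hmix : MixingWithDelay d G N)
    (μ : Measure ↥G) [IsProbabilityMeasure μ] [μ.IsMulLeftInvariant]
    (n m : ℕ) (hn : 1 ≤ n) (hm : 1 ≤ m)
    (u w v : V d) (hu : u.length = n) (hv : v = u ++ w) (hlen : n + N ≤ v.length)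
    (A B : Set (AutT d)) (hA : A ⊆ (G : Set (AutT d))) (hB : B ⊆ (G : Set (AutT d))) :
    μ (Subtype.val ⁻¹' (coneSet d G n A ∩ secPre d v (coneSet d G m B) ∩
          secPre d u (vertexStabSet d G w)))
      = μ (Subtype.val ⁻¹' coneSet d G n A) * μ (Subtype.val ⁻¹' coneSet d G m B) *
          μ (Subtype.val ⁻¹' vertexStabSet d G w)
    ∧
    μ (Subtype.val ⁻¹' (coneSet d G n A ∩ secPre d v (coneSet d G m B) ∩
          secPre d u (vertexStabSet d G w)))
        / μ (Subtype.val ⁻¹' secPre d u (vertexStabSet d G w) ∩ Subtype.val ⁻¹' (G : Set (AutT d)))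
      = μ (Subtype.val ⁻¹' coneSet d G n A) * μ (Subtype.val ⁻¹' coneSet d G m B) := by
  obtain ⟨⟨hss, hlt, -⟩, hstab, hdelay⟩ := hmix
  subst hv
  have hsme := hdelay m hm n hn (u ++ w) hlen
  have hE := measure_pseudomixingEvent μ hss hstab hn hu hsme hlt hA hB
  have hS0 : μ (Subtype.val ⁻¹' vertexStabSet d G w) ≠ 0 :=
    right_ne_zero_of_mul_eq_one (ncard_mul_measure_vertexStabSet μ hlt w)
  refine ⟨hE, ?_⟩
  rw [Subtype.coe_preimage_self, Set.inter_univ,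
    measure_secPre_vertexStabSet μ hss hstab hn hu hsme hlt, hE,
    ENNReal.mul_div_cancel_right hS0 (measure_ne_top μ _)]

/-- **Pseudomixing property.** Let `G ≤ Aut(T)` be a mixing closed group
with delay constant `N = N(m)`.  Then for all `n, m ≥ 1`, every vertex `v = uw` with
`|u| = n` and `|v| ≥ n + N`, and all `A ⊆ π_n(G)`, `B ⊆ π_m(G)`:
`μ_G(C_A ∩ 𝒯_v⁻¹(C_B) ∩ 𝒯_u⁻¹(st_G(w))) = μ_G(C_A)·μ_G(C_B)·μ_G(st_G(w))`, and in
particular `μ_G(C_A ∩ 𝒯_v⁻¹(C_B) | 𝒯_u⁻¹(st_G(w))) = μ_G(C_A)·μ_G(C_B)`. -/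
theorem pseudomixing
    (d : ℕ) (hd : 2 ≤ d) (G : Subgroup (AutT d))
    (hclosed : IsClosed (G : Set (AutT d)))
    (N : ℕ) (hmix : MixingWithDelay d G N)
    (μ : Measure ↥G) [IsProbabilityMeasure μ] [μ.IsMulLeftInvariant]
    (n m : ℕ) (hn : 1 ≤ n) (hm : 1 ≤ m)
    (u w v : V d) (hu : u.length = n) (hv : v = u ++ w) (hlen : n + N ≤ v.length)
    (A B : Set (AutT d)) (hA : A ⊆ (G : Set (AutT d))) (hB : B ⊆ (G : Set (AutT d))) :
    μ (Subtype.val ⁻¹' (coneSet d G n A ∩ secPre d v (coneSet d G m B) ∩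
          secPre d u (vertexStabSet d G w)))
      = μ (Subtype.val ⁻¹' coneSet d G n A) * μ (Subtype.val ⁻¹' coneSet d G m B) *
          μ (Subtype.val ⁻¹' vertexStabSet d G w)
    ∧
    μ (Subtype.val ⁻¹' (coneSet d G n A ∩ secPre d v (coneSet d G m B) ∩
          secPre d u (vertexStabSet d G w)))
        / μ (Subtype.val ⁻¹' secPre d u (vertexStabSet d G w) ∩ Subtype.val ⁻¹' (G : Set (AutT d)))
      = μ (Subtype.val ⁻¹' coneSet d G n A) * μ (Subtype.val ⁻¹' coneSet d G m B) :=
  pseudomixing_general d G N hmix μ n m hn hm u w v hu hv hlen A B hA hB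

end ArbGal
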